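/- arXiv:2304.10971 — 4 statements merged into one kernel-verified Lean document; each statement's English description precedes it below -/
import Mathlib

section
/- Assume c_f := min_j ‖f‖_{H^{-1}(Ω_j)} > 0. Let V_n ⊂ H^1_0(Ω) be a finite-dimensional subspace and suppose there exists a proper subset S ⊊ {1,…,d} such that V_n ∩ V_S = {0}. Then for every constant C ∈ (0,1) there exists y ∈ [1,∞)^d such that the Galerkin projection satisfies ‖u(y) − P^y_{V_n} u(y)‖_{H^1_0} ≥ C ‖u(y)‖_{H^1_0}, where P^y_{V_n} is the orthogonal projector onto V_n for the energy norm ‖·‖_y. -/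
open scoped BigOperators ENNReal InnerProductSpace
open Filter

noncomputable section

variable {V : Type*} [NormedAddCommGroup V] [InnerProductSpace ℝ V] [CompleteSpace V]

/-- The closed subspace `V_S` of functions whose gradient vanishes on `Ω_j` for all `j ∈ S`,
encoded through the local Dirichlet forms `B j v w = ∫_{Ω_j} ∇v·∇w`. -/
def VS {d : ℕ} (B : Fin d → V →L[ℝ] V →L[ℝ] ℝ) (S : Set (Fin d)) : Submodule ℝ V where
  carrier := {v | ∀ j ∈ S, B j v = 0}
  add_mem' := by
    intro a b ha hb j hj
    simp only [Set.mem_setOf_eq] at *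
    simp [map_add, ha j hj, hb j hj]
  zero_mem' := by intro j hj; simp
  smul_mem' := by
    intro c a ha j hj
    simp only [Set.mem_setOf_eq] at *
    simp [map_smul, ha j hj]

/-- The parametric energy bilinear form `a_y(v,w) = Σ_j y_j ∫_{Ω_j} ∇v·∇w`. -/
def aForm {d : ℕ} (B : Fin d → V →L[ℝ] V →L[ℝ] ℝ) (y : Fin d → ℝ) (v w : V) : ℝ :=
  ∑ j, y j * B j v w

/-- The parametric energy norm `‖v‖_y`. -/
def eNorm {d : ℕ} (B : Fin d → V →L[ℝ] V →L[ℝ] ℝ) (y : Fin d → ℝ) (v : V) : ℝ :=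
  Real.sqrt (aForm B y v v)

/-- `u` is the weak solution of the diffusion problem with (finite) parameter `y`. -/
def IsWeakSol {d : ℕ} (B : Fin d → V →L[ℝ] V →L[ℝ] ℝ) (f : V →L[ℝ] ℝ)
    (y : Fin d → ℝ) (u : V) : Prop :=
  ∀ v : V, aForm B y u v = f v

/-- `u` is the (possibly stiff-limit) solution for an extended parameter `y ∈ (0,∞]^d`:
on the set `S = {j | y j = ∞}` of infinite entries, `u ∈ V_S` and `u` solves the
limit variational problem over `V_S`. -/
def IsSolE {d : ℕ} (B : Fin d → V →L[ℝ] V →L[ℝ] ℝ) (f : V →L[ℝ] ℝ)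
    (y : Fin d → ℝ≥0∞) (u : V) : Prop :=
  u ∈ VS B {j | y j = ∞} ∧
  ∀ v ∈ VS B {j | y j = ∞}, ∑ j, (y j).toReal * B j u v = f v

/-- `p` is the `H^1_0`-orthogonal projection of `u` onto `K`. -/
def IsOrthProj (K : Submodule ℝ V) (u p : V) : Prop :=
  p ∈ K ∧ ∀ w ∈ K, ⟪u - p, w⟫_ℝ = 0

/-- `p` is the Galerkin projection of `u` onto `K` for the energy inner product `⟨·,·⟩_y`. -/
def IsGalProj {d : ℕ} (B : Fin d → V →L[ℝ] V →L[ℝ] ℝ) (y : Fin d → ℝ)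
    (K : Submodule ℝ V) (u p : V) : Prop :=
  p ∈ K ∧ ∀ w ∈ K, aForm B y (u - p) w = 0

/-- Galerkin projection for an extended parameter `y ∈ (0,∞]^d` (the energy inner
product being restricted to the finite components of `y`). -/
def IsGalProjE {d : ℕ} (B : Fin d → V →L[ℝ] V →L[ℝ] ℝ) (y : Fin d → ℝ≥0∞)
    (K : Submodule ℝ V) (u p : V) : Prop :=
  p ∈ K ∧ ∀ w ∈ K, ∑ j, (y j).toReal * B j (u - p) w = 0

/-- The finite set of multi-indices `ν ∈ ℕ^d` of total degree `|ν| ≤ k`. -/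
def mIdx (d k : ℕ) : Finset (Fin d → ℕ) :=
  (Fintype.piFinset fun _ : Fin d => Finset.range (k+1)).filter fun ν => ∑ j, ν j ≤ k

/-- The monomial `y^ν`. -/
def mono {d : ℕ} (y : Fin d → ℝ) (ν : Fin d → ℕ) : ℝ := ∏ j, y j ^ ν j

/-!
The idea: take `y = t` on `S` and `y = 1` off `S`. Since `V_n ∩ V_S = {0}` and `V_n` is
finite-dimensional, `Σ_{j ∈ S} ∫_{Ω_j} |∇v|²` is coercive on `V_n`, so testing the Galerkin
equation with `p = P^y_{V_n} u(y)` gives `(t - 1) ε ‖p‖ ≤ ‖f‖`: the projection is crushed as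
`t → ∞`. On the other hand, for `j ∉ S` the solution satisfies `⟨u, w⟩ = f w` on
`H^1_0(Ω_j)`, so `‖u(y)‖ ≥ c_f` uniformly in `t`.
-/

section PosSemidef

variable {E : Type*} [NormedAddCommGroup E] [NormedSpace ℝ E]

theorem ContinuousLinearMap.eq_zero_of_apply_self_eq_zero {b : E →L[ℝ] E →L[ℝ] ℝ}
    (hsymm : ∀ v w, b v w = b w v) (hnonneg : ∀ v, 0 ≤ b v v) {v : E} (hv : b v v = 0) :
    b v = 0 := by
  have hker := (LinearMap.BilinForm.apply_apply_same_eq_zero_iff b.toLinearMap₁₂ hnonneg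
    (LinearMap.isSymm_def.2 hsymm)).1 hv
  ext w
  exact LinearMap.congr_fun hker w

theorem isCoercive_of_forall_pos [FiniteDimensional ℝ E] (b : E →L[ℝ] E →L[ℝ] ℝ)
    (hpos : ∀ v, v ≠ 0 → 0 < b v v) : IsCoercive b := by
  have hcont : Continuous fun v => b v v := b.continuous₂.comp (continuous_id.prodMk continuous_id)
  obtain ⟨ε, hε, hsphere⟩ := (isCompact_sphere (0 : E) 1).exists_forall_le' hcont.continuousOn
    fun v hv => hpos v (ne_zero_of_mem_unit_sphere ⟨v, hv⟩)
  refine ⟨ε, hε, fun v => ?_⟩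
  rcases eq_or_ne v 0 with rfl | hv
  · simp
  have hnorm : 0 < ‖v‖ := norm_pos_iff.2 hv
  have hunit : ‖v‖⁻¹ • v ∈ Metric.sphere (0 : E) 1 := by
    simp [norm_smul, hnorm.ne']
  have hscale : b (‖v‖⁻¹ • v) (‖v‖⁻¹ • v) = b v v / (‖v‖ * ‖v‖) := by
    simp only [map_smul, smul_apply, smul_eq_mul]
    field_simp
  have := hsphere _ hunit
  rw [hscale, le_div_iff₀ (by positivity)] at this
  linarith

end PosSemidef

section Model

variable {E : Type*} [NormedAddCommGroup E] [InnerProductSpace ℝ E] {d : ℕ}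
  {B : Fin d → E →L[ℝ] E →L[ℝ] ℝ}

def stiffParam (S : Set (Fin d)) [DecidablePred (· ∈ S)] (t : ℝ) : Fin d → ℝ :=
  fun j => if j ∈ S then t else 1

def stiffForm (B : Fin d → E →L[ℝ] E →L[ℝ] ℝ) (S : Set (Fin d)) [DecidablePred (· ∈ S)] :
    E →L[ℝ] E →L[ℝ] ℝ :=
  ∑ j ∈ Finset.univ.filter (· ∈ S), B j

variable {S : Set (Fin d)} [DecidablePred (· ∈ S)]

theorem stiffForm_apply (v w : E) :
    stiffForm B S v w = ∑ j ∈ Finset.univ.filter (· ∈ S), B j v w := by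
  simp [stiffForm]

theorem aForm_stiffParam (hsum : ∀ v w : E, ∑ j, B j v w = ⟪v, w⟫_ℝ) (t : ℝ) (v w : E) :
    aForm B (stiffParam S t) v w = ⟪v, w⟫_ℝ + (t - 1) * stiffForm B S v w := by
  rw [← hsum, aForm, stiffForm_apply, Finset.mul_sum, Finset.sum_filter,
    ← Finset.sum_add_distrib]
  refine Finset.sum_congr rfl fun j _ => ?_
  by_cases hj : j ∈ S
  · simp only [stiffParam, hj, if_true]; ring
  · simp [stiffParam, hj]

theorem stiffForm_apply_self_nonneg (hnonneg : ∀ j (v : E), 0 ≤ B j v v) (v : E) :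
    0 ≤ stiffForm B S v v := by
  rw [stiffForm_apply]
  exact Finset.sum_nonneg fun j _ => hnonneg j v

theorem stiffForm_apply_self_eq_zero_iff (hsymm : ∀ j (v w : E), B j v w = B j w v)
    (hnonneg : ∀ j (v : E), 0 ≤ B j v v) {v : E} :
    stiffForm B S v v = 0 ↔ v ∈ VS B S := by
  rw [stiffForm_apply, Finset.sum_eq_zero_iff_of_nonneg fun j _ => hnonneg j v]
  refine ⟨fun h j hj => ?_, fun h j hj => ?_⟩
  · exact (B j).eq_zero_of_apply_self_eq_zero (hsymm j) (hnonneg j) (h j (by simpa using hj))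
  · rw [h j (by simpa using hj), zero_apply]

theorem exists_pos_mul_norm_sq_le_stiffForm (hsymm : ∀ j (v w : E), B j v w = B j w v)
    (hnonneg : ∀ j (v : E), 0 ≤ B j v v) (K : Submodule ℝ E) [FiniteDimensional ℝ K]
    (hK : K ⊓ VS B S = ⊥) :
    ∃ ε > 0, ∀ v ∈ K, ε * ‖v‖ ^ 2 ≤ stiffForm B S v v := by
  have hpos : ∀ v : K, v ≠ 0 →
      0 < (stiffForm B S).bilinearComp K.subtypeL K.subtypeL v v := by
    intro v hv
    rw [ContinuousLinearMap.bilinearComp_apply]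
    refine (stiffForm_apply_self_nonneg hnonneg (v : E)).lt_of_ne fun h => hv ?_
    have hmem : (v : E) ∈ K ⊓ VS B S :=
      ⟨v.2, (stiffForm_apply_self_eq_zero_iff hsymm hnonneg).1 h.symm⟩
    rw [hK] at hmem
    exact Subtype.ext hmem
  obtain ⟨ε, hε, hcoer⟩ := isCoercive_of_forall_pos _ hpos
  refine ⟨ε, hε, fun v hv => ?_⟩
  simpa [sq, mul_assoc] using hcoer ⟨v, hv⟩

theorem one_le_stiffParam {t : ℝ} (ht : 1 ≤ t) (j : Fin d) : 1 ≤ stiffParam S t j := by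
  unfold stiffParam
  split_ifs
  exacts [ht, le_rfl]

theorem stiffParam_of_notMem {t : ℝ} {j : Fin d} (hj : j ∉ S) : stiffParam S t j = 1 :=
  if_neg hj

variable {f : E →L[ℝ] ℝ} {y : Fin d → ℝ}

theorem aForm_sub_left (u p w : E) : aForm B y (u - p) w = aForm B y u w - aForm B y p w := by
  simp [aForm, mul_sub, Finset.sum_sub_distrib]

theorem aForm_eq_inner_of_mem (hsymm : ∀ j (v w : E), B j v w = B j w v)
    (hsum : ∀ v w : E, ∑ j, B j v w = ⟪v, w⟫_ℝ) {W : Submodule ℝ E} {j : Fin d}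
    (hW : ∀ w ∈ W, ∀ i, i ≠ j → B i w = 0) (hy : y j = 1) (v : E) {w : E} (hw : w ∈ W) :
    aForm B y v w = ⟪v, w⟫_ℝ := by
  have hvanish : ∀ i, i ≠ j → B i v w = 0 := fun i hi => by
    rw [hsymm, hW w hw i hi, zero_apply]
  rw [← hsum, aForm, Finset.sum_eq_single j (fun i _ hi => by rw [hvanish i hi, mul_zero])
    (by simp), Finset.sum_eq_single j (fun i _ hi => hvanish i hi) (by simp), hy, one_mul]

theorem norm_comp_subtypeL_le_of_isWeakSol (hsymm : ∀ j (v w : E), B j v w = B j w v)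
    (hsum : ∀ v w : E, ∑ j, B j v w = ⟪v, w⟫_ℝ) {W : Submodule ℝ E} {j : Fin d}
    (hW : ∀ w ∈ W, ∀ i, i ≠ j → B i w = 0) (hy : y j = 1) {u : E} (hu : IsWeakSol B f y u) :
    ‖f.comp W.subtypeL‖ ≤ ‖u‖ := by
  refine ContinuousLinearMap.opNorm_le_bound _ (norm_nonneg u) fun w => ?_
  rw [ContinuousLinearMap.comp_apply, Submodule.subtypeL_apply, ← hu,
    aForm_eq_inner_of_mem hsymm hsum hW hy u w.2]
  exact norm_inner_le_norm u (w : E)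

theorem IsGalProj.aForm_self {K : Submodule ℝ E} {u p : E} (hu : IsWeakSol B f y u)
    (hp : IsGalProj B y K u p) : aForm B y p p = f p := by
  have h := hp.2 p hp.1
  rw [aForm_sub_left, hu] at h
  linarith

theorem IsGalProj.mul_norm_le_stiffParam (hsum : ∀ v w : E, ∑ j, B j v w = ⟪v, w⟫_ℝ)
    {K : Submodule ℝ E} {ε t : ℝ} (ht : 1 ≤ t)
    (hcoer : ∀ v ∈ K, ε * ‖v‖ ^ 2 ≤ stiffForm B S v v) {u p : E}
    (hu : IsWeakSol B f (stiffParam S t) u) (hp : IsGalProj B (stiffParam S t) K u p) :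
    (t - 1) * ε * ‖p‖ ≤ ‖f‖ := by
  have henergy : ‖p‖ ^ 2 + (t - 1) * stiffForm B S p p ≤ ‖f‖ * ‖p‖ := by
    rw [← real_inner_self_eq_norm_sq, ← aForm_stiffParam hsum, hp.aForm_self hu]
    exact (le_abs_self _).trans (f.le_opNorm p)
  have hstiff : (t - 1) * (ε * ‖p‖ ^ 2) ≤ (t - 1) * stiffForm B S p p :=
    mul_le_mul_of_nonneg_left (hcoer p hp.1) (by linarith)
  rcases (norm_nonneg p).eq_or_lt with hp0 | hp0
  · rw [← hp0, mul_zero]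
    exact norm_nonneg f
  · nlinarith

end Model

theorem statement11_general
    {V : Type*} [NormedAddCommGroup V] [InnerProductSpace ℝ V] [CompleteSpace V]
    {d : ℕ}
    (B : Fin d → V →L[ℝ] V →L[ℝ] ℝ)
    (hsymm : ∀ (j : Fin d) (v w : V), B j v w = B j w v)
    (hnonneg : ∀ (j : Fin d) (v : V), 0 ≤ B j v v)
    (hsum : ∀ v w : V, ∑ j, B j v w = ⟪v, w⟫_ℝ)
    (f : V →L[ℝ] ℝ)
    (Wloc : Fin d → Submodule ℝ V)
    (hWloc : ∀ j : Fin d, ∀ v ∈ Wloc j, ∀ i : Fin d, i ≠ j → B i v = 0)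
    (hcf : 0 < ⨅ j : Fin d, ‖f.comp (Wloc j).subtypeL‖)
    (Vn : Submodule ℝ V) (hfin : FiniteDimensional ℝ Vn)
    (S : Set (Fin d)) (hS : S ≠ Set.univ) (hdisj : Vn ⊓ VS B S = ⊥)
    (Cc : ℝ) (hCc : Cc ∈ Set.Ioo (0 : ℝ) 1) :
    ∃ y : Fin d → ℝ, (∀ j, 1 ≤ y j) ∧
      ∀ u : V, IsWeakSol B f y u → ∀ p : V, IsGalProj B y Vn u p →
        Cc * ‖u‖ ≤ ‖u - p‖ := by
  classical
  obtain ⟨j₀, hj₀⟩ := (Set.ne_univ_iff_exists_notMem S).1 hS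
  set c := ⨅ j, ‖f.comp (Wloc j).subtypeL‖
  have hc : c ≤ ‖f.comp (Wloc j₀).subtypeL‖ := ciInf_le (Set.finite_range _).bddBelow j₀
  have hf : 0 < ‖f‖ := hcf.trans_le <| hc.trans <| (f.opNorm_comp_le _).trans <|
    mul_le_of_le_one_right (norm_nonneg f) (Submodule.norm_subtypeL_le _)
  obtain ⟨ε, hε, hcoer⟩ := exists_pos_mul_norm_sq_le_stiffForm hsymm hnonneg Vn hdisj
  set δ := (1 - Cc) * c
  have hδ : 0 < δ := mul_pos (by linarith [hCc.2]) hcf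
  set t := 1 + ‖f‖ / (ε * δ)
  have ht : 1 ≤ t := le_add_of_nonneg_right (by positivity)
  refine ⟨stiffParam S t, one_le_stiffParam ht, fun u hu p hp => ?_⟩
  have hu_ge : c ≤ ‖u‖ := hc.trans <|
    norm_comp_subtypeL_le_of_isWeakSol hsymm hsum (hWloc j₀) (stiffParam_of_notMem hj₀) hu
  have hp_le : ‖p‖ ≤ δ := by
    have h := hp.mul_norm_le_stiffParam hsum ht hcoer hu
    have ht' : (t - 1) * ε = ‖f‖ / δ := by simp only [t, add_sub_cancel_left]; field_simp
    rw [ht', div_mul_eq_mul_div, div_le_iff₀ hδ] at h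
    exact le_of_mul_le_mul_left (by linarith) hf
  calc Cc * ‖u‖ = ‖u‖ - (1 - Cc) * ‖u‖ := by ring
    _ ≤ ‖u‖ - ‖p‖ := by nlinarith [hCc.2]
    _ ≤ ‖u - p‖ := norm_sub_norm_le u p

/-- Proposition 4.1: if `V_n ∩ V_S = 0` for some proper subset `S`,
then the Galerkin projection cannot satisfy a uniform relative error bound: for any
`C ∈ (0,1)` there is `y` with `‖u(y) − P^y_{V_n} u(y)‖ ≥ C ‖u(y)‖`. -/
theorem statement11
    {V : Type*} [NormedAddCommGroup V] [InnerProductSpace ℝ V] [CompleteSpace V]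
    {d : ℕ}
    (hd : 0 < d)
    (B : Fin d → V →L[ℝ] V →L[ℝ] ℝ)
    (hsymm : ∀ (j : Fin d) (v w : V), B j v w = B j w v)
    (hnonneg : ∀ (j : Fin d) (v : V), 0 ≤ B j v v)
    (hsum : ∀ v w : V, ∑ j, B j v w = ⟪v, w⟫_ℝ)
    (f : V →L[ℝ] ℝ)
    (Wloc : Fin d → Submodule ℝ V)
    (hWloc : ∀ j : Fin d, ∀ v ∈ Wloc j, ∀ i : Fin d, i ≠ j → B i v = 0)
    (hcf : 0 < ⨅ j : Fin d, ‖f.comp (Wloc j).subtypeL‖)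
    (Vn : Submodule ℝ V) (hfin : FiniteDimensional ℝ Vn)
    (S : Set (Fin d)) (hS : S ≠ Set.univ) (hdisj : Vn ⊓ VS B S = ⊥)
    (Cc : ℝ) (hCc : Cc ∈ Set.Ioo (0 : ℝ) 1) :
    ∃ y : Fin d → ℝ, (∀ j, 1 ≤ y j) ∧
      ∀ u : V, IsWeakSol B f y u → ∀ p : V, IsGalProj B y Vn u p →
        Cc * ‖u‖ ≤ ‖u - p‖ :=
  statement11_general B hsymm hnonneg hsum f Wloc hWloc hcf Vn hfin S hS hdisj Cc hCc
end
end

section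
/- Assume c_f := min_j ‖f‖_{H^{-1}(Ω_j)} > 0. Let V_n = span{u(y^1),…,u(y^n)} be a reduced basis space of snapshots with parameter vectors y^i ∈ (0,∞)^d, and suppose the estimator v* = Σ_{i=1}^n c_i u(y^i) ∈ V_n satisfies the state estimation bound ‖ū − v*‖_{H^1_0} ≤ C μ_n exp(−c n^{1/(2d−2)}) ‖ū‖_{H^1_0} where ū = u(ȳ). Define the parameter estimate y* by (y*_j)^{-1} := Σ_{i=1}^n c_i / y^i_j for j = 1,…,d. Then ‖1/y* − 1/ȳ‖_∞ ≤ (C_f/c_f) C μ_n exp(−c n^{1/(2d−2)}) ‖1/ȳ‖_∞, where 1/y := (1/y_1,…,1/y_d) and ‖·‖_∞ is the max norm on ℝ^d. -/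
open scoped BigOperators ENNReal InnerProductSpace
open Filter

noncomputable section

variable {V : Type*} [NormedAddCommGroup V] [InnerProductSpace ℝ V] [CompleteSpace V]

/-- Proposition 4.4, parameter estimation: the inverse-diffusivity
estimate `‖1/y* − 1/ȳ‖_∞ ≤ (C_f/c_f) C μ_n exp(−c n^{1/(2d−2)}) ‖1/ȳ‖_∞` for the
parameter estimator `(y*_j)⁻¹ = Σ_i c_i / y^i_j` built from a reduced basis expansion. -/
theorem statement15
    {V : Type*} [NormedAddCommGroup V] [InnerProductSpace ℝ V] [CompleteSpace V]
    {d : ℕ}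
    (hd : 0 < d)
    (B : Fin d → V →L[ℝ] V →L[ℝ] ℝ)
    (hsymm : ∀ (j : Fin d) (v w : V), B j v w = B j w v)
    (hnonneg : ∀ (j : Fin d) (v : V), 0 ≤ B j v v)
    (hsum : ∀ v w : V, ∑ j, B j v w = ⟪v, w⟫_ℝ)
    (f : V →L[ℝ] ℝ)
    (Wloc : Fin d → Submodule ℝ V)
    (hWloc : ∀ j : Fin d, ∀ v ∈ Wloc j, ∀ i : Fin d, i ≠ j → B i v = 0)
    (hcf : 0 < ⨅ j : Fin d, ‖f.comp (Wloc j).subtypeL‖)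
    (n : ℕ) (ys : Fin n → Fin d → ℝ) (hys : ∀ i j, 0 < ys i j)
    (usnap : Fin n → V) (husnap : ∀ i, IsWeakSol B f (ys i) (usnap i))
    (cc : Fin n → ℝ)
    (ybar : Fin d → ℝ) (hybar : ∀ j, 0 < ybar j)
    (ubar : V) (hubar : IsWeakSol B f ybar ubar)
    (c C μn : ℝ)
    (hstate : ‖ubar - ∑ i, cc i • usnap i‖
      ≤ C * μn * Real.exp (-c * (n : ℝ) ^ (1 / (2 * (d : ℝ) - 2))) * ‖ubar‖) :
    (⨆ j : Fin d, |(∑ i, cc i / ys i j) - (ybar j)⁻¹|)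
      ≤ ‖f‖ / (⨅ j : Fin d, ‖f.comp (Wloc j).subtypeL‖)
          * (C * μn * Real.exp (-c * (n : ℝ) ^ (1 / (2 * (d : ℝ) - 2))))
          * (⨆ j : Fin d, (ybar j)⁻¹) := by
  haveI : Nonempty (Fin d) := ⟨⟨0, hd⟩⟩
  set cf := ⨅ j : Fin d, ‖f.comp (Wloc j).subtypeL‖ with hcf_def
  set E := C * μn * Real.exp (-c * (n : ℝ) ^ (1 / (2 * (d : ℝ) - 2))) with hE_def
  set M := ⨆ j : Fin d, (ybar j)⁻¹ with hM_def
  set vstar := ∑ i, cc i • usnap i with hv_def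
  -- Step A: local representation of inner products against Wloc j
  have key : ∀ (y : Fin d → ℝ) (u : V), (∀ j, 0 < y j) → IsWeakSol B f y u →
      ∀ j (w : V), w ∈ Wloc j → ⟪u, w⟫_ℝ = f w / y j := by
    intro y u hy hu j w hw
    have hvan : ∀ i, i ≠ j → B i u w = 0 := by
      intro i hi
      rw [hsymm i u w, hWloc j w hw i hi]
      simp
    have h1 : aForm B y u w = y j * B j u w := by
      rw [aForm, Finset.sum_eq_single j]
      · intro i _ hi; rw [hvan i hi]; ring
      · intro h; exact absurd (Finset.mem_univ j) h
    have h2 : ⟪u, w⟫_ℝ = B j u w := by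
      rw [← hsum u w, Finset.sum_eq_single j]
      · intro i _ hi; exact hvan i hi
      · intro h; exact absurd (Finset.mem_univ j) h
    have h3 := hu w
    rw [h1] at h3
    rw [h2, eq_div_iff (hy j).ne']
    linarith [h3]
  -- Step B: inner product of the error against Wloc j
  have hdiff : ∀ j (w : V), w ∈ Wloc j →
      ⟪ubar - vstar, w⟫_ℝ = ((ybar j)⁻¹ - ∑ i, cc i / ys i j) * f w := by
    intro j w hw
    have h1 : ⟪ubar, w⟫_ℝ = f w / ybar j := key ybar ubar hybar hubar j w hw
    have h2 : ⟪vstar, w⟫_ℝ = (∑ i, cc i / ys i j) * f w := by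
      rw [hv_def, sum_inner, Finset.sum_mul]
      refine Finset.sum_congr rfl fun i _ => ?_
      rw [real_inner_smul_left, key (ys i) (usnap i) (hys i) (husnap i) j w hw]
      ring
    rw [inner_sub_left, h1, h2]
    ring
  -- ubar ≠ 0
  obtain ⟨j0⟩ := (inferInstance : Nonempty (Fin d))
  have hune : ubar ≠ 0 := by
    intro h0
    have hz : f.comp (Wloc j0).subtypeL = 0 := by
      ext w
      have h := key ybar ubar hybar hubar j0 (w : V) w.2
      rw [h0] at h
      simp only [inner_zero_left] at h
      have : f (w : V) = 0 := by
        rcases div_eq_zero_iff.mp h.symm with h' | h'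
        · exact h'
        · exact absurd h' (hybar j0).ne'
      simpa using this
    have hle : cf ≤ ‖f.comp (Wloc j0).subtypeL‖ :=
      ciInf_le (Finite.bddBelow_range fun j : Fin d => ‖f.comp (Wloc j).subtypeL‖) j0
    rw [hz, ContinuousLinearMap.opNorm_zero] at hle
    exact absurd (lt_of_lt_of_le hcf hle) (lt_irrefl 0)
  have hupos : 0 < ‖ubar‖ := norm_pos_iff.mpr hune
  have hEnn : 0 ≤ E := by
    have h := le_trans (norm_nonneg (ubar - vstar)) hstate
    nlinarith [hupos]
  -- Step C: |δ_j| * cf ≤ ‖ubar - vstar‖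
  have hC : ∀ j, |(∑ i, cc i / ys i j) - (ybar j)⁻¹| * cf ≤ ‖ubar - vstar‖ := by
    intro j
    set δ := (∑ i, cc i / ys i j) - (ybar j)⁻¹ with hδ
    have hle : cf ≤ ‖f.comp (Wloc j).subtypeL‖ :=
      ciInf_le (Finite.bddBelow_range fun j : Fin d => ‖f.comp (Wloc j).subtypeL‖) j
    rcases eq_or_ne δ 0 with h0 | h0
    · rw [h0, abs_zero, zero_mul]
      exact norm_nonneg _
    · have hδpos : 0 < |δ| := abs_pos.mpr h0
      have hg : ‖f.comp (Wloc j).subtypeL‖ ≤ ‖ubar - vstar‖ / |δ| := by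
        apply ContinuousLinearMap.opNorm_le_bound _
          (div_nonneg (norm_nonneg _) hδpos.le)
        intro w
        have h := hdiff j (w : V) w.2
        have h2 : |δ| * |f (w : V)| = |⟪ubar - vstar, (w : V)⟫_ℝ| := by
          rw [h, abs_mul]
          congr 1
          rw [hδ, abs_sub_comm]
        have h3 : |⟪ubar - vstar, (w : V)⟫_ℝ| ≤ ‖ubar - vstar‖ * ‖(w : V)‖ :=
          abs_real_inner_le_norm _ _
        have hww : ‖w‖ = ‖(w : V)‖ := rfl
        simp only [ContinuousLinearMap.comp_apply, Submodule.subtypeL_apply,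
          Real.norm_eq_abs]
        rw [hww, div_mul_eq_mul_div, le_div_iff₀ hδpos, mul_comm (|f (w : V)|) (|δ|)]
        linarith
      calc |δ| * cf ≤ |δ| * ‖f.comp (Wloc j).subtypeL‖ :=
            mul_le_mul_of_nonneg_left hle (abs_nonneg _)
        _ ≤ |δ| * (‖ubar - vstar‖ / |δ|) := mul_le_mul_of_nonneg_left hg (abs_nonneg _)
        _ = ‖ubar - vstar‖ := by field_simp
  -- Step D: Lax-Milgram bound ‖ubar‖ ≤ ‖f‖ * M
  have hMj : ∀ j, (ybar j)⁻¹ ≤ M := fun j =>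
    le_ciSup (Finite.bddAbove_range fun j : Fin d => (ybar j)⁻¹) j
  have hMpos : 0 < M := lt_of_lt_of_le (inv_pos.mpr (hybar j0)) (hMj j0)
  have hub : ‖ubar‖ ≤ ‖f‖ * M := by
    have hsq : ‖ubar‖ ^ 2 = ∑ j, B j ubar ubar := by
      rw [hsum, real_inner_self_eq_norm_sq]
    have h1 : M⁻¹ * ‖ubar‖ ^ 2 ≤ aForm B ybar ubar ubar := by
      rw [hsq, aForm, Finset.mul_sum]
      refine Finset.sum_le_sum fun j _ => ?_
      have hM' : M⁻¹ ≤ ybar j := by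
        rw [inv_le_comm₀ hMpos (hybar j)]
        exact hMj j
      exact mul_le_mul_of_nonneg_right hM' (hnonneg j ubar)
    have h2 : aForm B ybar ubar ubar ≤ ‖f‖ * ‖ubar‖ := by
      rw [hubar ubar]
      calc f ubar ≤ |f ubar| := le_abs_self _
        _ = ‖f ubar‖ := (Real.norm_eq_abs _).symm
        _ ≤ ‖f‖ * ‖ubar‖ := f.le_opNorm ubar
    have h3 : M⁻¹ * ‖ubar‖ ^ 2 ≤ ‖f‖ * ‖ubar‖ := le_trans h1 h2
    have h4 := mul_le_mul_of_nonneg_left h3 hMpos.le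
    rw [← mul_assoc, mul_inv_cancel₀ hMpos.ne', one_mul] at h4
    -- h4 : ‖ubar‖ ^ 2 ≤ M * (‖f‖ * ‖ubar‖)
    nlinarith [hupos]
  -- Conclusion
  have hcfpos : 0 < cf := hcf
  refine ciSup_le fun j => ?_
  rw [show ‖f‖ / cf * E * M = (‖f‖ * E * M) / cf by ring, le_div_iff₀ hcfpos]
  calc |(∑ i, cc i / ys i j) - (ybar j)⁻¹| * cf ≤ ‖ubar - vstar‖ := hC j
    _ ≤ E * ‖ubar‖ := hstate
    _ ≤ E * (‖f‖ * M) := mul_le_mul_of_nonneg_left hub hEnn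
    _ = ‖f‖ * E * M := by ring

end
end

section
/- Let S ⊂ {1,…,d} and L ≥ 0, and let y ∈ [1,∞)^d satisfy y_j ≥ 2^L for all j ∈ S. Then ‖∇u(y)‖_{L²(Ω_S)} ≤ C_f 2^{-L/2}, where Ω_S := ∪_{j∈S} Ω_j; consequently, since ∇u_S(y_{S^c}) = 0 on Ω_S, ‖∇u(y) − ∇u_S(y_{S^c})‖_{L²(Ω_S)} ≤ C_f 2^{-L/2}. -/
open scoped BigOperators ENNReal InnerProductSpace
open Filter

noncomputable section

variable {V : Type*} [NormedAddCommGroup V] [InnerProductSpace ℝ V] [CompleteSpace V]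

/-- estimate (3.15): if `y_j ≥ 2^L` for `j ∈ S` then
`‖∇u(y)‖_{L²(Ω_S)} ≤ C_f 2^{−L/2}`, and the same bound holds for
`‖∇u(y) − ∇u_S(y_{S^c})‖_{L²(Ω_S)}` since `∇u_S(y_{S^c}) = 0` on `Ω_S`. -/
theorem statement18
    {V : Type*} [NormedAddCommGroup V] [InnerProductSpace ℝ V] [CompleteSpace V]
    {d : ℕ}
    (B : Fin d → V →L[ℝ] V →L[ℝ] ℝ)
    (hsymm : ∀ (j : Fin d) (v w : V), B j v w = B j w v)
    (hnonneg : ∀ (j : Fin d) (v : V), 0 ≤ B j v v)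
    (hsum : ∀ v w : V, ∑ j, B j v w = ⟪v, w⟫_ℝ)
    (f : V →L[ℝ] ℝ)
    (S : Finset (Fin d)) (L : ℕ)
    (y : Fin d → ℝ) (hy : ∀ j, 1 ≤ y j) (hyS : ∀ j ∈ S, (2 : ℝ) ^ L ≤ y j)
    (u : V) (hu : IsWeakSol B f y u) :
    Real.sqrt (∑ j ∈ S, B j u u) ≤ ‖f‖ * (2 : ℝ) ^ (-(L : ℝ) / 2) ∧
    ∀ uS : V, uS ∈ VS B ↑S →
      (∀ v ∈ VS B ↑S, ∑ j ∈ Sᶜ, y j * B j uS v = f v) →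
      Real.sqrt (∑ j ∈ S, B j (u - uS) (u - uS)) ≤ ‖f‖ * (2 : ℝ) ^ (-(L : ℝ) / 2) := by
  have hfu : ∑ j, y j * B j u u = f u := hu u
  have hBnn : ∀ j : Fin d, (0:ℝ) ≤ B j u u := fun j => hnonneg j u
  have hynn : ∀ j : Fin d, (0:ℝ) ≤ y j := fun j => le_trans zero_le_one (hy j)
  -- ‖u‖² ≤ f u
  have h1 : ‖u‖ ^ 2 ≤ f u := by
    have : ‖u‖ ^ 2 = ∑ j, B j u u := by
      rw [hsum u u, real_inner_self_eq_norm_sq]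
    rw [this, ← hfu]
    apply Finset.sum_le_sum
    intro j _
    nlinarith [hBnn j, hy j]
  have h2 : f u ≤ ‖f‖ * ‖u‖ := le_trans (le_abs_self _) (f.le_opNorm u)
  have hun : ‖u‖ ≤ ‖f‖ := by nlinarith [norm_nonneg u, norm_nonneg f]
  have hfu2 : f u ≤ ‖f‖ ^ 2 := by nlinarith [norm_nonneg u]
  -- 2^L * Σ_{j∈S} B j u u ≤ f u
  have h3 : (2:ℝ) ^ L * ∑ j ∈ S, B j u u ≤ f u := by
    rw [Finset.mul_sum, ← hfu]
    calc ∑ j ∈ S, (2:ℝ) ^ L * B j u u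
        ≤ ∑ j ∈ S, y j * B j u u := by
          apply Finset.sum_le_sum
          intro j hj
          exact mul_le_mul_of_nonneg_right (hyS j hj) (hBnn j)
      _ ≤ ∑ j, y j * B j u u := by
          apply Finset.sum_le_sum_of_subset_of_nonneg (Finset.subset_univ S)
          intro j _ _
          exact mul_nonneg (hynn j) (hBnn j)
  have hkey : ∑ j ∈ S, B j u u ≤ ‖f‖ ^ 2 * ((2:ℝ) ^ L)⁻¹ := by
    rw [← div_eq_mul_inv, le_div_iff₀ (by positivity : (0:ℝ) < (2:ℝ)^L)]
    nlinarith [h3, hfu2]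
  -- the RHS as a sqrt
  have hrhs : ‖f‖ * (2:ℝ) ^ (-(L:ℝ)/2) = Real.sqrt (‖f‖ ^ 2 * ((2:ℝ) ^ L)⁻¹) := by
    rw [Real.sqrt_mul (by positivity), Real.sqrt_sq (norm_nonneg f)]
    congr 1
    rw [show ((2:ℝ)^L)⁻¹ = (2:ℝ) ^ (-(L:ℝ)) by
      rw [← Real.rpow_natCast 2 L, ← Real.rpow_neg (by norm_num)]]
    rw [Real.sqrt_eq_rpow, ← Real.rpow_mul (by norm_num)]
    ring_nf
  have hbound : ∀ c : ℝ, c ≤ ‖f‖ ^ 2 * ((2:ℝ) ^ L)⁻¹ →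
      Real.sqrt c ≤ ‖f‖ * (2:ℝ) ^ (-(L:ℝ)/2) := by
    intro c hc
    rw [hrhs]
    exact Real.sqrt_le_sqrt hc
  refine ⟨hbound _ hkey, ?_⟩
  intro uS hmem _
  have heq : ∑ j ∈ S, B j (u - uS) (u - uS) = ∑ j ∈ S, B j u u := by
    apply Finset.sum_congr rfl
    intro j hj
    have h0 : B j uS = 0 := hmem j hj
    have h0' : B j u uS = 0 := by rw [hsymm j u uS, h0]; simp
    simp [map_sub, h0, h0', ContinuousLinearMap.sub_apply]
  rw [heq]
  exact hbound _ hkey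

end
end

section
/- Let R = [a_1,2a_1] × ⋯ × [a_d,2a_d] with a_j ≥ 1, and let N_k u(y) = Σ_{|ν|≤k} u_ν y^ν be the degree-k truncated Neumann series approximation of u(y) on R, i.e. N_k u(y) = Σ_{l=0}^k (−1)^l B(ỹ)^l A_ȳ^{-1} f with ȳ the center of R and ỹ = y − ȳ. Then the space V_R := span{u_ν : |ν| ≤ k} has dimension at most binom(k+d−1, d−1) (rather than binom(k+d, d)), due to the linear dependency A_ȳ = Σ_{j=1}^d ȳ_j A_j among the operators. -/
open scoped BigOperators ENNReal InnerProductSpace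
open Filter

set_option maxHeartbeats 1000000
set_option synthInstance.maxHeartbeats 1000000

noncomputable section

variable {V : Type*} [NormedAddCommGroup V] [InnerProductSpace ℝ V] [CompleteSpace V]

/-- If a vector-valued polynomial vanishes identically, its coefficients vanish. -/
lemma monoCoeffsZero {d : ℕ} {W : Type*} [AddCommGroup W] [Module ℝ W]
    (F : Finset (Fin d → ℕ)) (m : (Fin d → ℕ) → W)
    (h : ∀ y : Fin d → ℝ, ∑ ν ∈ F, mono y ν • m ν = 0) :
    ∀ ν ∈ F, m ν = 0 := by
  intro ν hν
  rw [← Module.forall_dual_apply_eq_zero_iff ℝ]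
  intro φ
  set P : MvPolynomial (Fin d) ℝ :=
    ∑ μ ∈ F, MvPolynomial.monomial (Finsupp.equivFunOnFinite.symm μ) (φ (m μ)) with hPdef
  have evalmon : ∀ (y : Fin d → ℝ) (μ : Fin d → ℕ),
      MvPolynomial.eval y (MvPolynomial.monomial (Finsupp.equivFunOnFinite.symm μ) (φ (m μ)))
        = φ (m μ) * mono y μ := by
    intro y μ
    rw [MvPolynomial.eval_monomial]
    congr 1
    rw [Finsupp.prod_fintype _ _ (fun i => pow_zero _)]
    unfold mono
    exact Finset.prod_congr rfl (fun j _ => by simp)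
  have hP : P = 0 := by
    apply MvPolynomial.funext
    intro y
    rw [hPdef, map_sum, map_zero]
    have := congrArg φ (h y)
    rw [map_sum, map_zero] at this
    simp only [map_smul, smul_eq_mul] at this
    calc ∑ μ ∈ F, MvPolynomial.eval y
            (MvPolynomial.monomial (Finsupp.equivFunOnFinite.symm μ) (φ (m μ)))
        = ∑ μ ∈ F, mono y μ * φ (m μ) := by
          refine Finset.sum_congr rfl fun μ _ => ?_
          rw [evalmon, mul_comm]
      _ = 0 := this
  have hc : MvPolynomial.coeff (Finsupp.equivFunOnFinite.symm ν) P = φ (m ν) := by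
    rw [hPdef, MvPolynomial.coeff_sum]
    rw [Finset.sum_eq_single ν]
    · rw [MvPolynomial.coeff_monomial, if_pos rfl]
    · intro μ hμ hne
      rw [MvPolynomial.coeff_monomial, if_neg]
      exact fun hh => hne (Finsupp.equivFunOnFinite.symm.injective hh)
    · intro h'; exact absurd hν h'
  rw [hP] at hc
  simpa using hc.symm

lemma monoCoeffsMem {d : ℕ} {W : Type*} [AddCommGroup W] [Module ℝ W]
    (F : Finset (Fin d → ℕ)) (m : (Fin d → ℕ) → W) (U : Submodule ℝ W)
    (h : ∀ y : Fin d → ℝ, ∑ ν ∈ F, mono y ν • m ν ∈ U) :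
    ∀ ν ∈ F, m ν ∈ U := by
  intro ν hν
  have h0 : ∀ y : Fin d → ℝ, ∑ μ ∈ F, mono y μ • U.mkQ (m μ) = 0 := by
    intro y
    have : ∑ μ ∈ F, mono y μ • U.mkQ (m μ) = U.mkQ (∑ μ ∈ F, mono y μ • m μ) := by
      rw [map_sum]
      exact Finset.sum_congr rfl fun μ _ => (map_smul _ _ _).symm
    rw [this, Submodule.mkQ_apply, Submodule.Quotient.mk_eq_zero]
    exact h y
  have := monoCoeffsZero F (fun μ => U.mkQ (m μ)) h0 ν hν
  rwa [Submodule.mkQ_apply, Submodule.Quotient.mk_eq_zero] at this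

lemma powCoeffsMem {W : Type*} [AddCommGroup W] [Module ℝ W]
    (n : ℕ) (v : ℕ → W) (U : Submodule ℝ W)
    (h : ∀ t : ℝ, ∑ i ∈ Finset.range n, t ^ i • v i ∈ U) :
    ∀ i ∈ Finset.range n, v i ∈ U := by
  intro i hi
  have hinj : ∀ a ∈ Finset.range n, ∀ b ∈ Finset.range n,
      (fun (_ : Fin 1) => a) = (fun _ => b) → a = b := by
    intro a _ b _ hab; exact congrFun hab 0
  have h' : ∀ y : Fin 1 → ℝ,
      ∑ ν ∈ (Finset.range n).image (fun (i : ℕ) (_ : Fin 1) => i), mono y ν • v (ν 0) ∈ U := by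
    intro y
    rw [Finset.sum_image hinj]
    have : ∀ j ∈ Finset.range n, mono y (fun (_ : Fin 1) => j) • v j = (y 0) ^ j • v j := by
      intro j _
      congr 1
      simp [mono]
    rw [Finset.sum_congr rfl this]
    exact h (y 0)
  have := monoCoeffsMem _ (fun ν => v (ν 0)) U h' (fun _ => i)
    (Finset.mem_image_of_mem _ hi)
  simpa using this


def wordApp {d : ℕ} (T : Fin d → V →L[ℝ] V) (g : V) : List (Fin d) → V
  | [] => g
  | j :: w => T j (wordApp T g w)

def cnt {d n : ℕ} (w : Fin n → Fin d) : Fin d → ℕ :=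
  fun j => (Finset.univ.filter fun t => w t = j).card

def sVec {d : ℕ} (T : Fin d → V →L[ℝ] V) (g : V) (n : ℕ) (ν : Fin d → ℕ) : V :=
  ∑ w ∈ Finset.univ.filter (fun w : Fin n → Fin d => cnt w = ν), wordApp T g (List.ofFn w)

def Ek (d n : ℕ) : Finset (Fin d → ℕ) :=
  (Fintype.piFinset fun _ : Fin d => Finset.range (n+1)).filter fun ν => ∑ j, ν j = n

lemma powApply {d : ℕ} (T : Fin d → V →L[ℝ] V) (g : V) (y : Fin d → ℝ) :
    ∀ n : ℕ, ((∑ j, y j • T j) ^ n) g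
      = ∑ w : Fin n → Fin d, (∏ t, y (w t)) • wordApp T g (List.ofFn w) := by
  intro n
  induction n with
  | zero =>
      rw [pow_zero]
      rw [Fintype.sum_unique]
      simp [wordApp]
  | succ n ih =>
      rw [pow_succ', ContinuousLinearMap.mul_apply, ih]
      rw [ContinuousLinearMap.sum_apply]
      have step : ∀ j : Fin d,
          (y j • T j) (∑ w : Fin n → Fin d, (∏ t, y (w t)) • wordApp T g (List.ofFn w))
          = ∑ w : Fin n → Fin d,
              (∏ t, y ((Fin.cons j w : Fin (n+1) → Fin d) t)) •
                wordApp T g (List.ofFn (Fin.cons j w)) := by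
        intro j
        rw [ContinuousLinearMap.smul_apply, map_sum, Finset.smul_sum]
        refine Finset.sum_congr rfl fun w _ => ?_
        rw [map_smul, smul_smul]
        have h1 : List.ofFn (Fin.cons j w : Fin (n+1) → Fin d) = j :: List.ofFn w := by
          rw [List.ofFn_succ]
          simp
        have h2 : (∏ t : Fin (n+1), y ((Fin.cons j w : Fin (n+1) → Fin d) t))
            = y j * ∏ t : Fin n, y (w t) := by
          rw [Fin.prod_univ_succ]
          simp
        rw [h1, h2]
        rfl
      rw [Finset.sum_congr rfl (fun j _ => step j)]
      have e1 : (∑ j : Fin d, ∑ w : Fin n → Fin d,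
            (∏ t : Fin (n+1), y ((Fin.cons j w : Fin (n+1) → Fin d) t)) •
              wordApp T g (List.ofFn (Fin.cons j w)))
          = ∑ p : Fin d × (Fin n → Fin d),
            (∏ t : Fin (n+1), y ((Fin.cons p.1 p.2 : Fin (n+1) → Fin d) t)) •
              wordApp T g (List.ofFn (Fin.cons p.1 p.2)) :=
        (Fintype.sum_prod_type
          (f := fun (p : Fin d × (Fin n → Fin d)) =>
            (∏ t : Fin (n+1), y ((Fin.cons p.1 p.2 : Fin (n+1) → Fin d) t)) •
              wordApp T g (List.ofFn (Fin.cons p.1 p.2)))).symm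
      rw [e1]
      refine Fintype.sum_equiv (Fin.consEquiv fun _ => Fin d) _ _ (fun p => ?_)
      rfl

lemma prodEqMono {d n : ℕ} (y : Fin d → ℝ) (w : Fin n → Fin d) :
    (∏ t, y (w t)) = mono y (cnt w) := by
  unfold mono cnt
  rw [← Finset.prod_fiberwise_of_maps_to (g := w) (t := Finset.univ)
    (fun t _ => Finset.mem_univ _) (fun t => y (w t))]
  refine Finset.prod_congr rfl fun j _ => ?_
  have : ∏ t ∈ Finset.univ.filter (fun t => w t = j), y (w t)
      = ∏ t ∈ Finset.univ.filter (fun t => w t = j), y j :=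
    Finset.prod_congr rfl fun t ht => by rw [(Finset.mem_filter.mp ht).2]
  rw [this, Finset.prod_const]

lemma cntMem {d n : ℕ} (w : Fin n → Fin d) : cnt w ∈ Ek d n := by
  unfold Ek
  rw [Finset.mem_filter]
  constructor
  · rw [Fintype.mem_piFinset]
    intro j
    rw [Finset.mem_range, Nat.lt_succ_iff]
    calc cnt w j ≤ (Finset.univ : Finset (Fin n)).card := Finset.card_filter_le _ _
      _ = n := Finset.card_fin n
  · have := Finset.card_eq_sum_card_fiberwise
      (f := w) (s := Finset.univ) (t := Finset.univ) (fun t _ => Finset.mem_univ _)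
    rw [Finset.card_fin] at this
    exact this.symm

lemma powApplyGroup {d : ℕ} (T : Fin d → V →L[ℝ] V) (g : V) (y : Fin d → ℝ) (n : ℕ) :
    ((∑ j, y j • T j) ^ n) g = ∑ ν ∈ Ek d n, mono y ν • sVec T g n ν := by
  rw [powApply]
  rw [← Finset.sum_fiberwise_of_maps_to (g := cnt) (fun w _ => cntMem w)]
  refine Finset.sum_congr rfl fun ν _ => ?_
  unfold sVec
  rw [Finset.smul_sum]
  refine Finset.sum_congr rfl fun w hw => ?_
  rw [prodEqMono, (Finset.mem_filter.mp hw).2]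

lemma neumannExpand (A : V →L[ℝ] V) (g : V) (k : ℕ) :
    ∑ l ∈ Finset.range (k+1), ((-1:ℝ)^l) • (((A - 1) ^ l) g)
      = ∑ m ∈ Finset.range (k+1),
          ((-1:ℝ)^m * (((k+1).choose (m+1) : ℕ) : ℝ)) • ((A^m) g) := by
  have hbin : ∀ l : ℕ, ((A - 1) ^ l) g
      = ∑ m ∈ Finset.range (l+1), ((-1:ℝ)^(l-m) * ((l.choose m : ℕ) : ℝ)) • ((A^m) g) := by
    intro l
    rw [sub_eq_add_neg, Commute.add_pow (Commute.neg_one_right A) l,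
      ContinuousLinearMap.sum_apply]
    refine Finset.sum_congr rfl fun m _ => ?_
    have e1 : (-1 : V →L[ℝ] V) ^ (l - m) = ((-1:ℝ)^(l-m)) • (1 : V →L[ℝ] V) := by
      rw [show (-1 : V →L[ℝ] V) = (-1 : ℝ) • 1 by simp, smul_pow, one_pow]
    rw [ContinuousLinearMap.mul_apply, ContinuousLinearMap.mul_apply,
      ContinuousLinearMap.natCast_apply, ← Nat.cast_smul_eq_nsmul ℝ, e1,
      ContinuousLinearMap.smul_apply, ContinuousLinearMap.one_apply,
      map_smul, map_smul, smul_smul, mul_comm]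
  calc ∑ l ∈ Finset.range (k+1), ((-1:ℝ)^l) • (((A - 1) ^ l) g)
      = ∑ l ∈ Finset.range (k+1), ∑ m ∈ Finset.range (l+1),
          ((-1:ℝ)^l * ((-1:ℝ)^(l-m) * ((l.choose m : ℕ) : ℝ))) • ((A^m) g) := by
        refine Finset.sum_congr rfl fun l _ => ?_
        rw [hbin l, Finset.smul_sum]
        exact Finset.sum_congr rfl fun m _ => by rw [smul_smul]
    _ = ∑ m ∈ Finset.range (k+1), ∑ l ∈ Finset.Icc m k,
          ((-1:ℝ)^l * ((-1:ℝ)^(l-m) * ((l.choose m : ℕ) : ℝ))) • ((A^m) g) := by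
        refine Finset.sum_comm' fun l m => ?_
        simp only [Finset.mem_range, Finset.mem_Icc, Nat.lt_succ_iff]
        omega
    _ = ∑ m ∈ Finset.range (k+1),
          ((-1:ℝ)^m * (((k+1).choose (m+1) : ℕ) : ℝ)) • ((A^m) g) := by
        refine Finset.sum_congr rfl fun m hm => ?_
        have key : ∀ l ∈ Finset.Icc m k,
            ((-1:ℝ)^l * ((-1:ℝ)^(l-m) * ((l.choose m : ℕ) : ℝ)))
              = (-1:ℝ)^m * ((l.choose m : ℕ) : ℝ) := by
          intro l hl
          have hml : m ≤ l := (Finset.mem_Icc.mp hl).1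
          have hs : (-1:ℝ)^l * (-1:ℝ)^(l-m) = (-1:ℝ)^m := by
            rw [← pow_add, show l + (l - m) = m + 2 * (l - m) by omega, pow_add, pow_mul,
              neg_one_sq, one_pow, mul_one]
          rw [← mul_assoc, hs]
        rw [Finset.sum_congr rfl (fun l hl => by rw [key l hl]), ← Finset.sum_smul,
          ← Finset.mul_sum, ← Nat.cast_sum, Nat.sum_Icc_choose]

lemma CbarEqOne {d : ℕ} (B : Fin d → V →L[ℝ] V →L[ℝ] ℝ)
    (hnonneg : ∀ (j : Fin d) (v : V), 0 ≤ B j v v)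
    (hsum : ∀ v w : V, ∑ j, B j v w = ⟪v, w⟫_ℝ)
    (yb : Fin d → ℝ) (hyb : ∀ j, 1 ≤ yb j)
    (T : Fin d → V →L[ℝ] V)
    (hT : ∀ (j : Fin d) (v w : V), aForm B yb (T j v) w = B j v w) :
    (∑ j, yb j • T j) = 1 := by
  have hsub : ∀ (x x' w : V), aForm B yb (x - x') w = aForm B yb x w - aForm B yb x' w := by
    intro x x' w
    unfold aForm
    rw [← Finset.sum_sub_distrib]
    refine Finset.sum_congr rfl fun j _ => ?_
    rw [map_sub, ContinuousLinearMap.sub_apply, mul_sub]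
  have key : ∀ (v w : V), aForm B yb ((∑ j, yb j • T j) v) w = aForm B yb v w := by
    intro v w
    have happ : (∑ j, yb j • T j) v = ∑ j, yb j • T j v := by
      rw [ContinuousLinearMap.sum_apply]
      exact Finset.sum_congr rfl fun j _ => by rw [ContinuousLinearMap.smul_apply]
    have expand : ∀ i : Fin d, B i (∑ j, yb j • T j v) w = ∑ j, yb j * B i (T j v) w := by
      intro i
      rw [map_sum, ContinuousLinearMap.sum_apply]
      refine Finset.sum_congr rfl fun j _ => ?_
      rw [map_smul, ContinuousLinearMap.smul_apply, smul_eq_mul]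
    have lin : aForm B yb ((∑ j, yb j • T j) v) w = ∑ j, yb j * aForm B yb (T j v) w := by
      rw [happ]
      unfold aForm
      simp only [expand, Finset.mul_sum]
      rw [Finset.sum_comm]
      exact Finset.sum_congr rfl fun j _ => Finset.sum_congr rfl fun i _ => by ring
    rw [lin]
    rw [Finset.sum_congr rfl fun j (_ : j ∈ Finset.univ) => by rw [hT j v w]]
    rfl
  ext v
  rw [ContinuousLinearMap.one_apply]
  set u := (∑ j, yb j • T j) v - v with hu
  have hzero : aForm B yb u u = 0 := by
    rw [hu, hsub, key, sub_self]
  have hinner : ⟪u, u⟫_ℝ ≤ aForm B yb u u := by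
    rw [← hsum]
    unfold aForm
    refine Finset.sum_le_sum fun j _ => ?_
    exact le_mul_of_one_le_left (hnonneg j u) (hyb j)
  have hu0 : u = 0 := real_inner_self_nonpos.mp (by rw [hzero] at hinner; exact hinner)
  rw [hu] at hu0
  exact sub_eq_zero.mp hu0

lemma mIdxFiber {d k : ℕ} (m : ℕ) (hm : m ∈ Finset.range (k+1)) :
    (mIdx d k).filter (fun ν => ∑ j, ν j = m) = Ek d m := by
  have hmk : m ≤ k := Nat.lt_succ_iff.mp (Finset.mem_range.mp hm)
  ext ν
  simp only [mIdx, Ek, Finset.mem_filter, Fintype.mem_piFinset, Finset.mem_range,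
    Nat.lt_succ_iff]
  constructor
  · rintro ⟨⟨-, -⟩, hs⟩
    refine ⟨fun j => ?_, hs⟩
    calc ν j ≤ ∑ i, ν i := Finset.single_le_sum (fun i _ => Nat.zero_le _) (Finset.mem_univ j)
      _ = m := hs
  · rintro ⟨hb, hs⟩
    exact ⟨⟨fun j => le_trans (hb j) hmk, le_of_eq (hs.trans rfl) |>.trans hmk⟩, hs⟩

lemma mIdxMapsTo {d k : ℕ} : ∀ ν ∈ mIdx d k, (∑ j, ν j) ∈ Finset.range (k+1) := by
  intro ν hν
  rw [Finset.mem_range, Nat.lt_succ_iff]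
  exact (Finset.mem_filter.mp hν).2

lemma memEkOfmIdx {d k : ℕ} {ν : Fin d → ℕ} (hν : ν ∈ mIdx d k) : ν ∈ Ek d (∑ j, ν j) := by
  rw [← mIdxFiber (∑ j, ν j) (mIdxMapsTo ν hν)]
  exact Finset.mem_filter.mpr ⟨hν, rfl⟩

lemma cardEk {d k : ℕ} (hd : 0 < d) : (Ek d k).card ≤ (k + d - 1).choose (d - 1) := by
  classical
  have cardsum : ∀ (f : Fin d → Multiset (Fin d)),
      Multiset.card (∑ j, f j) = ∑ j, Multiset.card (f j) := by
    intro f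
    induction (Finset.univ : Finset (Fin d)) using Finset.cons_induction with
    | empty => simp
    | cons a s ha ih => rw [Finset.sum_cons, Finset.sum_cons, Multiset.card_add, ih]
  have hcount : ∀ (ν : Fin d → ℕ) (j : Fin d),
      Multiset.count j (∑ i, Multiset.replicate (ν i) i) = ν j := by
    intro ν j
    rw [Multiset.count_sum']
    simp [Multiset.count_replicate]
  have hmap : ∀ ν ∈ Ek d k, (∑ j, Multiset.replicate (ν j) j) ∈
      (Finset.univ : Finset (Sym (Fin d) k)).image Sym.toMultiset := by
    intro ν hν
    refine Finset.mem_image.mpr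
      ⟨(Subtype.mk (∑ j, Multiset.replicate (ν j) j) ?_ : Sym (Fin d) k),
        Finset.mem_univ _, rfl⟩
    rw [cardsum]
    simp only [Multiset.card_replicate]
    exact (Finset.mem_filter.mp hν).2
  have hinj : Set.InjOn (fun ν : Fin d → ℕ => ∑ j, Multiset.replicate (ν j) j) (Ek d k) := by
    intro ν _ μ _ h
    funext j
    have := congrArg (Multiset.count j) h
    rwa [hcount, hcount] at this
  calc (Ek d k).card
      ≤ ((Finset.univ : Finset (Sym (Fin d) k)).image
          Sym.toMultiset).card :=
        Finset.card_le_card_of_injOn _ hmap hinj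
    _ ≤ (Finset.univ : Finset (Sym (Fin d) k)).card := Finset.card_image_le
    _ = Fintype.card (Sym (Fin d) k) := rfl
    _ = (d + k - 1).choose k := by
        rw [Sym.card_sym_eq_choose, Fintype.card_fin]
    _ = (k + d - 1).choose (d - 1) := by
        have h1 : k ≤ k + d - 1 := by omega
        have h2 : k + d - 1 - k = d - 1 := by omega
        rw [show d + k - 1 = k + d - 1 by omega, ← h2, Nat.choose_symm h1]


/-- Remark 3.2: the span `V_R` of the coefficients `u_ν` of the
truncated Neumann series `N_k u(y) = Σ_{l≤k} (−1)^l B(ỹ)^l A_ȳ⁻¹ f` has dimension at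
most `binom(k+d−1, d−1)`, due to the dependency relation `A_ȳ = Σ_j ȳ_j A_j`.
Here `T j = A_ȳ⁻¹ A_j` and `g = A_ȳ⁻¹ f` are characterized through the `ȳ`-form. -/
theorem statement19
    {V : Type*} [NormedAddCommGroup V] [InnerProductSpace ℝ V] [CompleteSpace V]
    {d : ℕ}
    (hd : 0 < d)
    (B : Fin d → V →L[ℝ] V →L[ℝ] ℝ)
    (hsymm : ∀ (j : Fin d) (v w : V), B j v w = B j w v)
    (hnonneg : ∀ (j : Fin d) (v : V), 0 ≤ B j v v)
    (hsum : ∀ v w : V, ∑ j, B j v w = ⟪v, w⟫_ℝ)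
    (f : V →L[ℝ] ℝ)
    (a : Fin d → ℝ) (ha : ∀ j, 1 ≤ a j)
    (T : Fin d → V →L[ℝ] V) (g : V)
    (hT : ∀ (j : Fin d) (v w : V), aForm B (fun i => 3 / 2 * a i) (T j v) w = B j v w)
    (hg : ∀ w : V, aForm B (fun i => 3 / 2 * a i) g w = f w)
    (k : ℕ) :
    ∃ c : (Fin d → ℕ) → V,
      (∀ y : Fin d → ℝ, (∀ j, a j ≤ y j ∧ y j ≤ 2 * a j) →
        ∑ l ∈ Finset.range (k + 1),
            ((-1 : ℝ) ^ l) • (((∑ j, (y j - 3 / 2 * a j) • T j) ^ l) g)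
          = ∑ ν ∈ mIdx d k, mono y ν • c ν) ∧
      Module.finrank ℝ (Submodule.span ℝ (c '' ↑(mIdx d k)))
        ≤ Nat.choose (k + d - 1) (d - 1) := by
  classical
  have hyb1 : ∀ j, (1:ℝ) ≤ 3 / 2 * a j := fun j => by nlinarith [ha j]
  have hone : (∑ j, (3 / 2 * a j) • T j) = (1 : V →L[ℝ] V) :=
    CbarEqOne B hnonneg hsum _ hyb1 T hT
  refine ⟨fun ν => ((-1 : ℝ) ^ (∑ j, ν j) * (((k+1).choose ((∑ j, ν j) + 1) : ℕ) : ℝ)) •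
      sVec T g (∑ j, ν j) ν, ?_, ?_⟩
  · intro y _
    have hsubst : (∑ j, (y j - 3 / 2 * a j) • T j) = (∑ j, y j • T j) - 1 := by
      rw [← hone, ← Finset.sum_sub_distrib]
      exact Finset.sum_congr rfl fun j _ => sub_smul _ _ _
    calc ∑ l ∈ Finset.range (k + 1),
            ((-1 : ℝ) ^ l) • (((∑ j, (y j - 3 / 2 * a j) • T j) ^ l) g)
        = ∑ l ∈ Finset.range (k + 1),
            ((-1 : ℝ) ^ l) • ((((∑ j, y j • T j) - 1) ^ l) g) := by rw [hsubst]
      _ = ∑ m ∈ Finset.range (k+1), ((-1:ℝ)^m * (((k+1).choose (m+1) : ℕ) : ℝ)) •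
            (((∑ j, y j • T j)^m) g) := neumannExpand _ g k
      _ = ∑ m ∈ Finset.range (k+1), ∑ ν ∈ Ek d m, mono y ν •
            (((-1:ℝ)^(∑ j, ν j) * (((k+1).choose ((∑ j, ν j) + 1) : ℕ) : ℝ)) •
              sVec T g (∑ j, ν j) ν) := by
          refine Finset.sum_congr rfl fun m hm => ?_
          rw [powApplyGroup, Finset.smul_sum]
          refine Finset.sum_congr rfl fun ν hν => ?_
          have hs : ∑ j, ν j = m := by
            have := (Finset.mem_filter.mp hν).2
            exact this
          rw [smul_smul, smul_smul, hs, mul_comm]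
      _ = ∑ ν ∈ mIdx d k, mono y ν •
            (((-1:ℝ)^(∑ j, ν j) * (((k+1).choose ((∑ j, ν j) + 1) : ℕ) : ℝ)) •
              sVec T g (∑ j, ν j) ν) := by
          rw [Finset.sum_congr rfl (fun m hm => by rw [← mIdxFiber m hm])]
          exact Finset.sum_fiberwise_of_maps_to mIdxMapsTo _
  · set U : Submodule ℝ V := Submodule.span ℝ (sVec T g k '' ↑(Ek d k)) with hU
    have ha' : ∀ z : Fin d → ℝ, ((∑ j, z j • T j) ^ k) g ∈ U := by
      intro z
      rw [powApplyGroup]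
      exact Submodule.sum_mem _ fun ν hν => Submodule.smul_mem _ _
        (Submodule.subset_span (Set.mem_image_of_mem _ (Finset.mem_coe.mpr hν)))
    have hb : ∀ (z : Fin d → ℝ) (m : ℕ), m ∈ Finset.range (k+1) →
        ((∑ j, z j • T j) ^ m) g ∈ U := by
      intro z m hm
      have hval : ∀ t : ℝ, ∑ i ∈ Finset.range (k+1),
          t^i • (((k.choose i : ℕ):ℝ) • (((∑ j, z j • T j)^i) g)) ∈ U := by
        intro t
        have hsplit : (∑ j, (t * z j + 3/2 * a j) • T j)
            = t • (∑ j, z j • T j) + 1 := by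
          rw [← hone, Finset.smul_sum, ← Finset.sum_add_distrib]
          refine Finset.sum_congr rfl fun j _ => ?_
          rw [add_smul, smul_smul]
        have hAexp : ∑ i ∈ Finset.range (k+1),
            t^i • (((k.choose i : ℕ):ℝ) • (((∑ j, z j • T j)^i) g))
            = ((∑ j, (t * z j + 3/2 * a j) • T j) ^ k) g := by
          rw [hsplit, Commute.add_pow (Commute.one_right _) k,
            ContinuousLinearMap.sum_apply]
          refine Finset.sum_congr rfl fun i hi => ?_
          rw [one_pow, mul_one, smul_pow, ContinuousLinearMap.mul_apply,
            ContinuousLinearMap.natCast_apply, ContinuousLinearMap.smul_apply, map_nsmul,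
            ← Nat.cast_smul_eq_nsmul ℝ]
        rw [hAexp]
        exact ha' _
      have hcoef := powCoeffsMem (k+1)
        (fun i => ((k.choose i : ℕ) : ℝ) • (((∑ j, z j • T j) ^ i) g)) U hval m hm
      have hkm : (0:ℝ) < ((k.choose m : ℕ) : ℝ) := by
        exact_mod_cast Nat.choose_pos (Nat.lt_succ_iff.mp (Finset.mem_range.mp hm))
      have := Submodule.smul_mem U (((k.choose m : ℕ) : ℝ))⁻¹ hcoef
      rwa [smul_smul, inv_mul_cancel₀ (ne_of_gt hkm), one_smul] at this
    have hc : ∀ ν ∈ mIdx d k, sVec T g (∑ j, ν j) ν ∈ U := by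
      intro ν hν
      refine monoCoeffsMem (Ek d (∑ j, ν j)) (sVec T g (∑ j, ν j)) U ?_ ν (memEkOfmIdx hν)
      intro y
      rw [← powApplyGroup]
      exact hb y _ (mIdxMapsTo ν hν)
    have hle : Submodule.span ℝ
        ((fun ν => ((-1 : ℝ) ^ (∑ j, ν j) * (((k+1).choose ((∑ j, ν j) + 1) : ℕ) : ℝ)) •
          sVec T g (∑ j, ν j) ν) '' ↑(mIdx d k)) ≤ U := by
      rw [Submodule.span_le]
      rintro x ⟨ν, hν, rfl⟩
      exact Submodule.smul_mem _ _ (hc ν (Finset.mem_coe.mp hν))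
    haveI hfin : FiniteDimensional ℝ U :=
      FiniteDimensional.span_of_finite ℝ ((Ek d k).finite_toSet.image (sVec T g k))
    calc Module.finrank ℝ (Submodule.span ℝ
          ((fun ν => ((-1 : ℝ) ^ (∑ j, ν j) * (((k+1).choose ((∑ j, ν j) + 1) : ℕ) : ℝ)) •
            sVec T g (∑ j, ν j) ν) '' ↑(mIdx d k)))
        ≤ Module.finrank ℝ U := Submodule.finrank_mono hle
      _ ≤ ((Ek d k).image (sVec T g k)).card := by
          rw [hU, ← Finset.coe_image]
          exact finrank_span_finset_le_card _
      _ ≤ (Ek d k).card := Finset.card_image_le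
      _ ≤ (k + d - 1).choose (d - 1) := cardEk hd


end
end
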